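/- If a strategy σ' implemented by a finite-state transducer T with n states realizes the LDL_cp formula c(φ) over (I, O ∪ {p}) (for a PLDL_◇ formula φ), then the outcome of every play consistent with σ' is (n+1)-bounded with respect to the proposition p. -/
import Mathlib


/- Common development: Parametric Linear Dynamic Logic (PLDL) -/

namespace PLDL

/-- Propositional formulas over atomic propositions `P`. -/
inductive PropForm (P : Type) : Type where
  | tt : PropForm P
  | ff : PropForm P
  | atom : P → PropForm P
  | not : PropForm P → PropForm P
  | and : PropForm P → PropForm P → PropForm P
  | or : PropForm P → PropForm P → PropForm P

/-- Satisfaction of a propositional formula by a set of atomic propositions. -/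
def PropForm.Sat {P : Type} (A : Set P) : PropForm P → Prop
  | .tt => True
  | .ff => False
  | .atom p => p ∈ A
  | .not φ => ¬ PropForm.Sat A φ
  | .and φ ψ => PropForm.Sat A φ ∧ PropForm.Sat A ψ
  | .or φ ψ => PropForm.Sat A φ ∨ PropForm.Sat A ψ

def PropForm.map {P Q : Type} (f : P → Q) : PropForm P → PropForm Q
  | .tt => .tt
  | .ff => .ff
  | .atom p => .atom (f p)
  | .not φ => .not (PropForm.map f φ)
  | .and φ ψ => .and (PropForm.map f φ) (PropForm.map f ψ)
  | .or φ ψ => .or (PropForm.map f φ) (PropForm.map f ψ)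

/-- Position `n` of the word `w` is a changepoint w.r.t. the proposition `c`:
`n = 0` or the truth value of `c` differs at positions `n-1` and `n`. -/
def Cp {P : Type} (c : P) (w : ℕ → Set P) (n : ℕ) : Prop :=
  n = 0 ∨ ¬ ((c ∈ w (n - 1)) ↔ (c ∈ w n))

/-- The infix `w_n ⋯ w_{n+j-1}` contains at most one changepoint w.r.t. `c`
(the first position of an infix is always a changepoint of the infix, so this says
that the truth value of `c` is constant on positions `n, …, n+j-1`). -/
def CpFree {P : Type} (c : P) (w : ℕ → Set P) (n j : ℕ) : Prop :=
  ∀ i, n ≤ i → i + 1 < n + j → ((c ∈ w i) ↔ (c ∈ w (i + 1)))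

/-- `w` is `k`-bounded w.r.t. `c`: every block has length at most `k`, i.e.
every changepoint is followed by another changepoint within distance `k`. -/
def Bounded {P : Type} (c : P) (w : ℕ → Set P) (k : ℕ) : Prop :=
  ∀ n, Cp c w n → ∃ m, n < m ∧ m ≤ n + k ∧ Cp c w m

/-- `w` is `k`-spaced w.r.t. `c`: it has infinitely many changepoints and
every block has length at least `k`. -/
def Spaced {P : Type} (c : P) (w : ℕ → Set P) (k : ℕ) : Prop :=
  (∀ N, ∃ n, N < n ∧ Cp c w n) ∧
  (∀ m n, Cp c w m → Cp c w n → m < n → m + k ≤ n)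

mutual
/-- PLDL formulas over atomic propositions `P` and variables `V`, possibly with
changepoint-bounded operators (which store the distinguished proposition). -/
inductive Formula (P V : Type) : Type where
  | pos : P → Formula P V
  | neg : P → Formula P V
  | and : Formula P V → Formula P V → Formula P V
  | or : Formula P V → Formula P V → Formula P V
  | dia : Reg P V → Formula P V → Formula P V
  | box : Reg P V → Formula P V → Formula P V
  | diaCp : P → Reg P V → Formula P V → Formula P V
  | boxCp : P → Reg P V → Formula P V → Formula P V
  | diaLe : Reg P V → V → Formula P V → Formula P V
  | boxLe : Reg P V → V → Formula P V → Formula P V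

/-- Regular expressions with tests. -/
inductive Reg (P V : Type) : Type where
  | prop : PropForm P → Reg P V
  | test : Formula P V → Reg P V
  | plus : Reg P V → Reg P V → Reg P V
  | comp : Reg P V → Reg P V → Reg P V
  | star : Reg P V → Reg P V
end

mutual
/-- Semantics:  `Sat w α n φ` means `(w, n, α) ⊨ φ`. -/
def Sat {P V : Type} (w : ℕ → Set P) (α : V → ℕ) : ℕ → Formula P V → Prop
  | n, .pos p => p ∈ w n
  | n, .neg p => p ∉ w n
  | n, .and φ ψ => Sat w α n φ ∧ Sat w α n ψ
  | n, .or φ ψ => Sat w α n φ ∨ Sat w α n ψ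
  | n, .dia r φ => ∃ j : ℕ, Match w α r n (n + j) ∧ Sat w α (n + j) φ
  | n, .box r φ => ∀ j : ℕ, Match w α r n (n + j) → Sat w α (n + j) φ
  | n, .diaCp c r φ => ∃ j : ℕ, Match w α r n (n + j) ∧ CpFree c w n j ∧ Sat w α (n + j) φ
  | n, .boxCp c r φ => ∀ j : ℕ, Match w α r n (n + j) → CpFree c w n j → Sat w α (n + j) φ
  | n, .diaLe r z φ => ∃ j : ℕ, j ≤ α z ∧ Match w α r n (n + j) ∧ Sat w α (n + j) φ
  | n, .boxLe r z φ => ∀ j : ℕ, j ≤ α z → Match w α r n (n + j) → Sat w α (n + j) φ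

/-- The match relation `R(r, w, α)`. -/
def Match {P V : Type} (w : ℕ → Set P) (α : V → ℕ) : Reg P V → ℕ → ℕ → Prop
  | .prop φ, m, n => n = m + 1 ∧ PropForm.Sat (w m) φ
  | .test θ, m, n => n = m ∧ Sat w α m θ
  | .plus r s, m, n => Match w α r m n ∨ Match w α s m n
  | .comp r s, m, n => ∃ k, Match w α r m k ∧ Match w α s k n
  | .star r, m, n => Relation.ReflTransGen (fun a b => Match w α r a b) m n
end

mutual
/-- The set of subformulas `cl(φ)` (regular expressions are not subformulas,
but the formulas appearing in tests are). -/
def Formula.cl {P V : Type} : Formula P V → Set (Formula P V)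
  | .pos p => {Formula.pos p}
  | .neg p => {Formula.neg p}
  | .and φ ψ => insert (Formula.and φ ψ) (Formula.cl φ ∪ Formula.cl ψ)
  | .or φ ψ => insert (Formula.or φ ψ) (Formula.cl φ ∪ Formula.cl ψ)
  | .dia r φ => insert (Formula.dia r φ) (Reg.cl r ∪ Formula.cl φ)
  | .box r φ => insert (Formula.box r φ) (Reg.cl r ∪ Formula.cl φ)
  | .diaCp c r φ => insert (Formula.diaCp c r φ) (Reg.cl r ∪ Formula.cl φ)
  | .boxCp c r φ => insert (Formula.boxCp c r φ) (Reg.cl r ∪ Formula.cl φ)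
  | .diaLe r z φ => insert (Formula.diaLe r z φ) (Reg.cl r ∪ Formula.cl φ)
  | .boxLe r z φ => insert (Formula.boxLe r z φ) (Reg.cl r ∪ Formula.cl φ)

/-- The subformulas appearing in the tests of a regular expression. -/
def Reg.cl {P V : Type} : Reg P V → Set (Formula P V)
  | .prop _ => ∅
  | .test θ => Formula.cl θ
  | .plus r s => Reg.cl r ∪ Reg.cl s
  | .comp r s => Reg.cl r ∪ Reg.cl s
  | .star r => Reg.cl r
end

/-- The length of a regular expression. -/
def Reg.len {P V : Type} : Reg P V → ℕ
  | .prop _ => 1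
  | .test _ => 1
  | .plus r s => Reg.len r + Reg.len s + 1
  | .comp r s => Reg.len r + Reg.len s + 1
  | .star r => Reg.len r + 1

mutual
/-- Sum of the lengths of the regular expressions appearing in a formula
(counted with multiplicity). -/
def Formula.regLen {P V : Type} : Formula P V → ℕ
  | .pos _ => 0
  | .neg _ => 0
  | .and φ ψ => Formula.regLen φ + Formula.regLen ψ
  | .or φ ψ => Formula.regLen φ + Formula.regLen ψ
  | .dia r φ => Reg.len r + Reg.regLen r + Formula.regLen φ
  | .box r φ => Reg.len r + Reg.regLen r + Formula.regLen φ
  | .diaCp _ r φ => Reg.len r + Reg.regLen r + Formula.regLen φ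
  | .boxCp _ r φ => Reg.len r + Reg.regLen r + Formula.regLen φ
  | .diaLe r _ φ => Reg.len r + Reg.regLen r + Formula.regLen φ
  | .boxLe r _ φ => Reg.len r + Reg.regLen r + Formula.regLen φ

/-- Sum of the lengths of the regular expressions appearing in the tests of `r`. -/
def Reg.regLen {P V : Type} : Reg P V → ℕ
  | .prop _ => 0
  | .test θ => Formula.regLen θ
  | .plus r s => Reg.regLen r + Reg.regLen s
  | .comp r s => Reg.regLen r + Reg.regLen s
  | .star r => Reg.regLen r
end

/-- The size `|φ|` of a formula: the number of subformulas `|cl(φ)|` plus the sum of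
the lengths of the regular expressions appearing in `φ` (with multiplicity). -/
noncomputable def Formula.size {P V : Type} (φ : Formula P V) : ℕ :=
  (Formula.cl φ).ncard + Formula.regLen φ

mutual
/-- Number of syntax nodes of a formula (a structural size notion, used for
regular expressions with tests). -/
def Formula.nodes {P V : Type} : Formula P V → ℕ
  | .pos _ => 1
  | .neg _ => 1
  | .and φ ψ => Formula.nodes φ + Formula.nodes ψ + 1
  | .or φ ψ => Formula.nodes φ + Formula.nodes ψ + 1
  | .dia r φ => Reg.nodes r + Formula.nodes φ + 1
  | .box r φ => Reg.nodes r + Formula.nodes φ + 1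
  | .diaCp _ r φ => Reg.nodes r + Formula.nodes φ + 1
  | .boxCp _ r φ => Reg.nodes r + Formula.nodes φ + 1
  | .diaLe r _ φ => Reg.nodes r + Formula.nodes φ + 1
  | .boxLe r _ φ => Reg.nodes r + Formula.nodes φ + 1

/-- Number of syntax nodes of a regular expression with tests (the size of `r`). -/
def Reg.nodes {P V : Type} : Reg P V → ℕ
  | .prop _ => 1
  | .test θ => Formula.nodes θ + 1
  | .plus r s => Reg.nodes r + Reg.nodes s + 1
  | .comp r s => Reg.nodes r + Reg.nodes s + 1
  | .star r => Reg.nodes r + 1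
end

mutual
/-- `var_◇(φ)`: variables parameterizing diamond-operators in subformulas of `φ`. -/
def Formula.varDia {P V : Type} : Formula P V → Set V
  | .pos _ => ∅
  | .neg _ => ∅
  | .and φ ψ => Formula.varDia φ ∪ Formula.varDia ψ
  | .or φ ψ => Formula.varDia φ ∪ Formula.varDia ψ
  | .dia r φ => Reg.varDia r ∪ Formula.varDia φ
  | .box r φ => Reg.varDia r ∪ Formula.varDia φ
  | .diaCp _ r φ => Reg.varDia r ∪ Formula.varDia φ
  | .boxCp _ r φ => Reg.varDia r ∪ Formula.varDia φ
  | .diaLe r z φ => insert z (Reg.varDia r ∪ Formula.varDia φ)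
  | .boxLe r _ φ => Reg.varDia r ∪ Formula.varDia φ

def Reg.varDia {P V : Type} : Reg P V → Set V
  | .prop _ => ∅
  | .test θ => Formula.varDia θ
  | .plus r s => Reg.varDia r ∪ Reg.varDia s
  | .comp r s => Reg.varDia r ∪ Reg.varDia s
  | .star r => Reg.varDia r
end

mutual
/-- `var_□(φ)`: variables parameterizing box-operators in subformulas of `φ`. -/
def Formula.varBox {P V : Type} : Formula P V → Set V
  | .pos _ => ∅
  | .neg _ => ∅
  | .and φ ψ => Formula.varBox φ ∪ Formula.varBox ψ
  | .or φ ψ => Formula.varBox φ ∪ Formula.varBox ψ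
  | .dia r φ => Reg.varBox r ∪ Formula.varBox φ
  | .box r φ => Reg.varBox r ∪ Formula.varBox φ
  | .diaCp _ r φ => Reg.varBox r ∪ Formula.varBox φ
  | .boxCp _ r φ => Reg.varBox r ∪ Formula.varBox φ
  | .diaLe r _ φ => Reg.varBox r ∪ Formula.varBox φ
  | .boxLe r z φ => insert z (Reg.varBox r ∪ Formula.varBox φ)

def Reg.varBox {P V : Type} : Reg P V → Set V
  | .prop _ => ∅
  | .test θ => Formula.varBox θ
  | .plus r s => Reg.varBox r ∪ Reg.varBox s
  | .comp r s => Reg.varBox r ∪ Reg.varBox s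
  | .star r => Reg.varBox r
end

/-- `var(φ) = var_◇(φ) ∪ var_□(φ)`. -/
def Formula.var {P V : Type} (φ : Formula P V) : Set V :=
  Formula.varDia φ ∪ Formula.varBox φ

/-- A PLDL formula is well-formed if `var_◇(φ) ∩ var_□(φ) = ∅`. -/
def Formula.WellFormed {P V : Type} (φ : Formula P V) : Prop :=
  Formula.varDia φ ∩ Formula.varBox φ = ∅

mutual
/-- No changepoint-bounded operators occur (a genuine PLDL formula). -/
def Formula.NoCp {P V : Type} : Formula P V → Prop
  | .pos _ => True
  | .neg _ => True
  | .and φ ψ => Formula.NoCp φ ∧ Formula.NoCp ψ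
  | .or φ ψ => Formula.NoCp φ ∧ Formula.NoCp ψ
  | .dia r φ => Reg.NoCp r ∧ Formula.NoCp φ
  | .box r φ => Reg.NoCp r ∧ Formula.NoCp φ
  | .diaCp _ _ _ => False
  | .boxCp _ _ _ => False
  | .diaLe r _ φ => Reg.NoCp r ∧ Formula.NoCp φ
  | .boxLe r _ φ => Reg.NoCp r ∧ Formula.NoCp φ

def Reg.NoCp {P V : Type} : Reg P V → Prop
  | .prop _ => True
  | .test θ => Formula.NoCp θ
  | .plus r s => Reg.NoCp r ∧ Reg.NoCp s
  | .comp r s => Reg.NoCp r ∧ Reg.NoCp s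
  | .star r => Reg.NoCp r
end

mutual
/-- No parameterized operators occur (an LDL resp. LDL_cp formula). -/
def Formula.NoParam {P V : Type} : Formula P V → Prop
  | .pos _ => True
  | .neg _ => True
  | .and φ ψ => Formula.NoParam φ ∧ Formula.NoParam ψ
  | .or φ ψ => Formula.NoParam φ ∧ Formula.NoParam ψ
  | .dia r φ => Reg.NoParam r ∧ Formula.NoParam φ
  | .box r φ => Reg.NoParam r ∧ Formula.NoParam φ
  | .diaCp _ r φ => Reg.NoParam r ∧ Formula.NoParam φ
  | .boxCp _ r φ => Reg.NoParam r ∧ Formula.NoParam φ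
  | .diaLe _ _ _ => False
  | .boxLe _ _ _ => False

def Reg.NoParam {P V : Type} : Reg P V → Prop
  | .prop _ => True
  | .test θ => Formula.NoParam θ
  | .plus r s => Reg.NoParam r ∧ Reg.NoParam s
  | .comp r s => Reg.NoParam r ∧ Reg.NoParam s
  | .star r => Reg.NoParam r
end

/-- The dual (negation) of a formula, defined via the dualities. -/
def Formula.not {P V : Type} : Formula P V → Formula P V
  | .pos p => .neg p
  | .neg p => .pos p
  | .and φ ψ => .or (Formula.not φ) (Formula.not ψ)
  | .or φ ψ => .and (Formula.not φ) (Formula.not ψ)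
  | .dia r φ => .box r (Formula.not φ)
  | .box r φ => .dia r (Formula.not φ)
  | .diaCp c r φ => .boxCp c r (Formula.not φ)
  | .boxCp c r φ => .diaCp c r (Formula.not φ)
  | .diaLe r z φ => .boxLe r z (Formula.not φ)
  | .boxLe r z φ => .diaLe r z (Formula.not φ)

mutual
/-- Renaming of atomic propositions. -/
def Formula.map {P Q V : Type} (f : P → Q) : Formula P V → Formula Q V
  | .pos p => .pos (f p)
  | .neg p => .neg (f p)
  | .and φ ψ => .and (Formula.map f φ) (Formula.map f ψ)
  | .or φ ψ => .or (Formula.map f φ) (Formula.map f ψ)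
  | .dia r φ => .dia (Reg.map f r) (Formula.map f φ)
  | .box r φ => .box (Reg.map f r) (Formula.map f φ)
  | .diaCp c r φ => .diaCp (f c) (Reg.map f r) (Formula.map f φ)
  | .boxCp c r φ => .boxCp (f c) (Reg.map f r) (Formula.map f φ)
  | .diaLe r z φ => .diaLe (Reg.map f r) z (Formula.map f φ)
  | .boxLe r z φ => .boxLe (Reg.map f r) z (Formula.map f φ)

def Reg.map {P Q V : Type} (f : P → Q) : Reg P V → Reg Q V
  | .prop φ => .prop (PropForm.map f φ)
  | .test θ => .test (Formula.map f θ)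
  | .plus r s => .plus (Reg.map f r) (Reg.map f s)
  | .comp r s => .comp (Reg.map f r) (Reg.map f s)
  | .star r => .star (Reg.map f r)
end

mutual
/-- `rel(φ)`: replace every parameterized diamond-operator (and, dually, every
parameterized box-operator) by the corresponding changepoint-bounded operator
w.r.t. the distinguished proposition `c`, also inside tests. -/
def Formula.rel {P V : Type} (c : P) : Formula P V → Formula P V
  | .pos p => .pos p
  | .neg p => .neg p
  | .and φ ψ => .and (Formula.rel c φ) (Formula.rel c ψ)
  | .or φ ψ => .or (Formula.rel c φ) (Formula.rel c ψ)
  | .dia r φ => .dia (Reg.rel c r) (Formula.rel c φ)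
  | .box r φ => .box (Reg.rel c r) (Formula.rel c φ)
  | .diaCp d r φ => .diaCp d (Reg.rel c r) (Formula.rel c φ)
  | .boxCp d r φ => .boxCp d (Reg.rel c r) (Formula.rel c φ)
  | .diaLe r _ φ => .diaCp c (Reg.rel c r) (Formula.rel c φ)
  | .boxLe r _ φ => .boxCp c (Reg.rel c r) (Formula.rel c φ)

def Reg.rel {P V : Type} (c : P) : Reg P V → Reg P V
  | .prop φ => .prop φ
  | .test θ => .test (Formula.rel c θ)
  | .plus r s => .plus (Reg.rel c r) (Reg.rel c s)
  | .comp r s => .comp (Reg.rel c r) (Reg.rel c s)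
  | .star r => .star (Reg.rel c r)
end

mutual
/-- Remove the parameters: each `⟨r⟩_{≤x}ψ` becomes `⟨r⟩ψ` (dually for boxes). -/
def Formula.dropParam {P V : Type} : Formula P V → Formula P V
  | .pos p => .pos p
  | .neg p => .neg p
  | .and φ ψ => .and (Formula.dropParam φ) (Formula.dropParam ψ)
  | .or φ ψ => .or (Formula.dropParam φ) (Formula.dropParam ψ)
  | .dia r φ => .dia (Reg.dropParam r) (Formula.dropParam φ)
  | .box r φ => .box (Reg.dropParam r) (Formula.dropParam φ)
  | .diaCp c r φ => .diaCp c (Reg.dropParam r) (Formula.dropParam φ)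
  | .boxCp c r φ => .boxCp c (Reg.dropParam r) (Formula.dropParam φ)
  | .diaLe r _ φ => .dia (Reg.dropParam r) (Formula.dropParam φ)
  | .boxLe r _ φ => .box (Reg.dropParam r) (Formula.dropParam φ)

def Reg.dropParam {P V : Type} : Reg P V → Reg P V
  | .prop φ => .prop φ
  | .test θ => .test (Formula.dropParam θ)
  | .plus r s => .plus (Reg.dropParam r) (Reg.dropParam s)
  | .comp r s => .comp (Reg.dropParam r) (Reg.dropParam s)
  | .star r => .star (Reg.dropParam r)
end

/-- `χ_{∞c} = [tt*]⟨tt*⟩c`: `c` holds infinitely often. -/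
def chiInfPos {P V : Type} (c : P) : Formula P V :=
  .box (.star (.prop .tt)) (.dia (.star (.prop .tt)) (.pos c))

/-- `χ_{∞¬c} = [tt*]⟨tt*⟩¬c`: `¬c` holds infinitely often. -/
def chiInfNeg {P V : Type} (c : P) : Formula P V :=
  .box (.star (.prop .tt)) (.dia (.star (.prop .tt)) (.neg c))

/-- `c(φ) = rel(φ) ∧ χ_{∞c} ∧ χ_{∞¬c}`, where the original formula over `P` is
embedded via `f` into the extended set of propositions containing the fresh
proposition `c`. -/
def cFormAt {P Q V : Type} (c : Q) (f : P → Q) (φ : Formula P V) : Formula Q V :=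
  .and (Formula.rel c (Formula.map f φ)) (.and (chiInfPos c) (chiInfNeg c))

end PLDL
namespace PLDL

/-! ### Automata -/

/-- Positive Boolean combinations over `Q` (including `tt` and `ff`). -/
inductive PosBool (Q : Type) : Type where
  | tt : PosBool Q
  | ff : PosBool Q
  | var : Q → PosBool Q
  | and : PosBool Q → PosBool Q → PosBool Q
  | or : PosBool Q → PosBool Q → PosBool Q

/-- A set `S ⊆ Q` satisfies a positive Boolean combination. -/
def PosBool.Sat {Q : Type} (S : Set Q) : PosBool Q → Prop
  | .tt => True
  | .ff => False
  | .var q => q ∈ S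
  | .and f g => PosBool.Sat S f ∧ PosBool.Sat S g
  | .or f g => PosBool.Sat S f ∨ PosBool.Sat S g

/-- An alternating Büchi automaton with states `Q` and alphabet `S`. -/
structure ABA (Q S : Type) where
  init : Q
  δ : Q → S → PosBool Q
  acc : Set Q

/-- A run of an alternating Büchi automaton on `w`: a directed graph with
vertices in `Q × ℕ`, edges only from level `n` to level `n+1`, containing
`(init, 0)`, such that the successors of every vertex satisfy the transition
condition. -/
structure ABARun {Q S : Type} (A : ABA Q S) (w : ℕ → S) where
  V : Set (Q × ℕ)
  E : Q × ℕ → Q × ℕ → Prop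
  edge_ok : ∀ u v, E u v → u ∈ V ∧ v ∈ V ∧ v.2 = u.2 + 1
  init_mem : (A.init, 0) ∈ V
  trans : ∀ q n, (q, n) ∈ V → PosBool.Sat {q' | E (q, n) (q', n + 1)} (A.δ q (w n))

/-- A run is accepting if every infinite path through it visits the accepting
states infinitely often. -/
def ABARun.Accepting {Q S : Type} {A : ABA Q S} {w : ℕ → S} (ρ : ABARun A w) : Prop :=
  ∀ (f : ℕ → Q) (s : ℕ), (f 0, s) ∈ ρ.V → (∀ i, ρ.E (f i, s + i) (f (i + 1), s + i + 1)) →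
    ∀ N, ∃ i, N ≤ i ∧ f i ∈ A.acc

/-- The language of an alternating Büchi automaton. -/
def ABA.Lang {Q S : Type} (A : ABA Q S) : Set (ℕ → S) :=
  { w | ∃ ρ : ABARun A w, ρ.Accepting }

/-- The bounded-match property of a run w.r.t. a set `B` of states and a bound `b`:
every path of the run all of whose states lie in `B` has length at most `b`. -/
def ABARun.BoundedMatch {Q S : Type} {A : ABA Q S} {w : ℕ → S} (ρ : ABARun A w)
    (B : Set Q) (b : ℕ) : Prop :=
  ∀ (f : ℕ → Q) (n ℓ : ℕ), (∀ i, i ≤ ℓ → f i ∈ B) →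
    (∀ i, i < ℓ → ρ.E (f i, n + i) (f (i + 1), n + i + 1)) → (f 0, n) ∈ ρ.V → ℓ ≤ b

/-- A non-deterministic Büchi automaton. -/
structure NBA (Q S : Type) where
  init : Q
  δ : Q → S → Set Q
  acc : Set Q

/-- The language of a non-deterministic Büchi automaton. -/
def NBA.Lang {Q S : Type} (A : NBA Q S) : Set (ℕ → S) :=
  { w | ∃ ρ : ℕ → Q, ρ 0 = A.init ∧ (∀ n, ρ (n + 1) ∈ A.δ (ρ n) (w n)) ∧
          ∀ N, ∃ n, N ≤ n ∧ ρ n ∈ A.acc }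

/-- A deterministic parity automaton. -/
structure DPA (Q S : Type) where
  init : Q
  δ : Q → S → Q
  color : Q → ℕ

/-- The unique run of a deterministic parity automaton. -/
def DPA.run {Q S : Type} (A : DPA Q S) (w : ℕ → S) : ℕ → Q
  | 0 => A.init
  | n + 1 => A.δ (A.run w n) (w n)

/-- Acceptance: the maximal color occurring infinitely often in the run is even. -/
def DPA.Accepts {Q S : Type} (A : DPA Q S) (w : ℕ → S) : Prop :=
  ∃ k, Even k ∧ (∀ N, ∃ n, N ≤ n ∧ A.color (A.run w n) = k) ∧
    ∀ j, (∀ N, ∃ n, N ≤ n ∧ A.color (A.run w n) = j) → j ≤ k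

/-- The language of a deterministic parity automaton. -/
def DPA.Lang {Q S : Type} (A : DPA Q S) : Set (ℕ → S) := { w | A.Accepts w }

/-! ### Transition systems -/

/-- A transition system with states `S` labeled by sets of atomic propositions in `P`. -/
structure TS (S P : Type) where
  init : S
  E : S → S → Prop
  label : S → Set P

/-- A path through a transition system (starting anywhere). -/
def TS.IsPath {S P : Type} (T : TS S P) (π : ℕ → S) : Prop :=
  ∀ n, T.E (π n) (π (n + 1))

/-- An initial path through a transition system. -/
def TS.IsInitialPath {S P : Type} (T : TS S P) (π : ℕ → S) : Prop :=
  π 0 = T.init ∧ T.IsPath π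

/-- The trace of a path. -/
def TS.trace {S P : Type} (T : TS S P) (π : ℕ → S) : ℕ → Set P :=
  fun n => T.label (π n)

/-- The parallel composition `S ∥ S'` of two transition systems whose initial
states carry the same label. -/
def TS.par {S S' P : Type} (T : TS S P) (T' : TS S' P)
    (h : T.label T.init = T'.label T'.init) :
    TS { x : S × S' // T.label x.1 = T'.label x.2 } P where
  init := ⟨(T.init, T'.init), h⟩
  E := fun x y => T.E x.val.1 y.val.1 ∧ T'.E x.val.2 y.val.2
  label := fun x => T.label x.val.1

/-- `T` satisfies `φ` with respect to `α`: every trace of an initial path is a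
model of `φ` w.r.t. `α`. -/
def TS.Satisfies {S P V : Type} (T : TS S P) (φ : Formula P V) (α : V → ℕ) : Prop :=
  ∀ π : ℕ → S, T.IsInitialPath π → Sat (T.trace π) α 0 φ

/-- The assume-guarantee specification `⟨φ_A⟩ T ⟨φ_G⟩`: for every countably
infinite transition system `T'` (with matching initial label), if `T ∥ T'`
satisfies `φ_A` w.r.t. some `α`, then `T ∥ T'` satisfies `φ_G` w.r.t. some `β`. -/
def AGSpec {S P V : Type} (φA : Formula P V) (T : TS S P) (φG : Formula P V) : Prop :=
  ∀ (T' : TS ℕ P) (h : T.label T.init = T'.label T'.init),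
    (∃ α : V → ℕ, (T.par T' h).Satisfies φA α) → ∃ β : V → ℕ, (T.par T' h).Satisfies φG β

/-! ### ε-NFAs with markings -/

/-- An ε-NFA with markings: states `Q`, alphabet `Set P`, an initial state, letter
transitions, ε-transitions, final states, and a partial marking of states by formulas. -/
structure MNFA (Q P V : Type) where
  init : Q
  δ : Q → Set P → Set Q
  eps : Q → Set Q
  final : Set Q
  mark : Q → Option (Formula P V)

/-- `EpsPath A q q' π`: `π` is an ε-path from `q` to `q'`. -/
inductive EpsPath {Q P V : Type} (A : MNFA Q P V) : Q → Q → List Q → Prop where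
  | single (q : Q) : EpsPath A q q [q]
  | cons (q q' q'' : Q) (l : List Q) : q' ∈ A.eps q → EpsPath A q' q'' l →
      EpsPath A q q'' (q :: l)

/-- `m(π)`: the set of markings visited by an ε-path. -/
def marks {Q P V : Type} (A : MNFA Q P V) (π : List Q) : Set (Formula P V) :=
  { θ | ∃ q ∈ π, A.mark q = some θ }

/-- `A` has an accepting run on the prefix `w₀ ⋯ w_{n-1}` of `w` with ε-paths
`π₀, …, π_n` such that `w_i w_{i+1} ⋯ ⊨ ⋀ m(π_i)` (w.r.t. `α`) for all `0 ≤ i ≤ n`. -/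
def GoodRun {Q P V : Type} (A : MNFA Q P V) (w : ℕ → Set P) (α : V → ℕ) (n : ℕ) : Prop :=
  ∃ ρ : ℕ → Q, ρ 0 = A.init ∧
    (∀ i, i < n → ∃ (q' : Q) (π : List Q), EpsPath A (ρ i) q' π ∧
      ρ (i + 1) ∈ A.δ q' (w i) ∧ ∀ θ ∈ marks A π, Sat (fun j => w (i + j)) α 0 θ) ∧
    (∃ (q' : Q) (π : List Q), EpsPath A (ρ n) q' π ∧ q' ∈ A.final ∧
      ∀ θ ∈ marks A π, Sat (fun j => w (n + j)) α 0 θ)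

/-! ### Realizability -/

/-- The outcome of the play in which Player I plays `i` and Player O plays
according to the strategy `σ`. -/
def outcomeW {I O : Type} (σ : List (Set I) → Set O) (i : ℕ → Set I) : ℕ → Set (I ⊕ O) :=
  fun n => Sum.inl '' i n ∪ Sum.inr '' σ ((List.range (n + 1)).map i)

/-- `φ` is realizable over `(I, O)` with respect to the valuation `α`: Player O
has a strategy such that every outcome satisfies `φ` w.r.t. `α`. -/
def RealizableWrt {I O V : Type} (φ : Formula (I ⊕ O) V) (α : V → ℕ) : Prop :=
  ∃ σ : List (Set I) → Set O, ∀ i : ℕ → Set I, Sat (outcomeW σ i) α 0 φ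

/-- Realizability over the swapped partition `(O, I)`: the player controlling `O`
moves first in each round, the player controlling `I` responds. -/
def RealizableSwapWrt {I O V : Type} (φ : Formula (I ⊕ O) V) (α : V → ℕ) : Prop :=
  ∃ σ : List (Set O) → Set I, ∀ o : ℕ → Set O,
    Sat (fun n => Sum.inl '' σ ((List.range (n + 1)).map o) ∪ Sum.inr '' o n) α 0 φ

/-- A (finite-state) transducer. -/
structure Transducer (Q A B : Type) where
  init : Q
  δ : Q → A → Q
  out : Q → B

/-- The extended transition function `δ*`. -/
def Transducer.run {Q A B : Type} (T : Transducer Q A B) (l : List A) : Q :=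
  l.foldl T.δ T.init

/-- The strategy implemented by a transducer: `f_T(w) = τ(δ*(w))`. -/
def Transducer.strategy {Q A B : Type} (T : Transducer Q A B) : List A → B :=
  fun l => T.out (T.run l)

end PLDL

namespace PLDL

private lemma match_star_tt' {P V : Type} (w : ℕ → Set P) (α : V → ℕ) (m j : ℕ) :
    Match w α (Reg.star (Reg.prop PropForm.tt)) m (m + j) := by
  induction j with
  | zero => exact Relation.ReflTransGen.refl
  | succ j ih => exact Relation.ReflTransGen.tail ih ⟨rfl, trivial⟩

private lemma inf_pos' {P V : Type} (c : P) (w : ℕ → Set P) (α : V → ℕ)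
    (h : Sat w α 0 (chiInfPos c)) : ∀ N, ∃ m, N ≤ m ∧ c ∈ w m := by
  intro N
  simp only [chiInfPos, Sat] at h
  obtain ⟨j, _, hc⟩ := h N (match_star_tt' w α 0 N)
  exact ⟨0 + N + j, by omega, hc⟩

private lemma inf_neg' {P V : Type} (c : P) (w : ℕ → Set P) (α : V → ℕ)
    (h : Sat w α 0 (chiInfNeg c)) : ∀ N, ∃ m, N ≤ m ∧ c ∉ w m := by
  intro N
  simp only [chiInfNeg, Sat] at h
  obtain ⟨j, _, hc⟩ := h N (match_star_tt' w α 0 N)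
  exact ⟨0 + N + j, by omega, hc⟩

private lemma mem_outcome_inr_none' {I O Q : Type}
    (T : Transducer Q (Set I) (Set (Option O))) (i : ℕ → Set I) (m : ℕ) :
    (Sum.inr (none : Option O) ∈ outcomeW T.strategy i m) ↔
      none ∈ T.out (T.run ((List.range (m + 1)).map i)) := by
  simp [outcomeW, Transducer.strategy]

private lemma run_succ' {Q A B : Type} (T : Transducer Q A B) (i : ℕ → A) (m : ℕ) :
    T.run ((List.range (m + 1)).map i) = T.δ (T.run ((List.range m).map i)) (i m) := by
  simp [Transducer.run, List.range_succ]

end PLDL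

namespace PLDL

def cRealForm {I O V : Type} (φ : Formula (I ⊕ O) V) : Formula (I ⊕ Option O) V :=
  cFormAt (Sum.inr (none : Option O)) (Sum.map id some) φ

/-- If the strategy implemented by a finite-state transducer
`T` with `n` states realizes `c(φ)` over `(I, O ∪ {p})` (for a `PLDL_◇`
formula `φ`), then the outcome of every play consistent with it is
`(n+1)`-bounded with respect to the fresh proposition `p`. -/
theorem transducer_outcome_bounded {I O V Q : Type} [Fintype Q]
    (φ : Formula (I ⊕ O) V) (hφ : φ.NoCp) (hbox : φ.varBox = ∅)
    (T : Transducer Q (Set I) (Set (Option O)))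
    (hwin : ∀ i : ℕ → Set I, Sat (outcomeW T.strategy i) (fun _ => 0) 0 (cRealForm φ)) :
    ∀ i : ℕ → Set I,
      Bounded (Sum.inr (none : Option O) : I ⊕ Option O) (outcomeW T.strategy i)
        (Fintype.card Q + 1) := by
  classical
  intro i n hcp
  by_contra hno
  push_neg at hno
  set k := Fintype.card Q with hk
  set c : I ⊕ Option O := Sum.inr (none : Option O) with hc
  set w := outcomeW T.strategy i with hw
  set s : ℕ → Q := fun m => T.run ((List.range (m + 1)).map i) with hs
  -- the truth value of c is constant on positions n .. n+k+1
  have hstep : ∀ m, n < m → m ≤ n + (k + 1) → ((c ∈ w (m - 1)) ↔ (c ∈ w m)) := by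
    intro m h1 h2
    have := hno m h1 h2
    simp only [Cp, not_or, not_not] at this
    exact this.2
  have hconst : ∀ m, n ≤ m → m ≤ n + (k + 1) → ((c ∈ w m) ↔ (c ∈ w n)) := by
    intro m hm
    induction m, hm using Nat.le_induction with
    | base => intro _; rfl
    | succ m hm ih =>
      intro h2
      have h3 := hstep (m + 1) (by omega) h2
      simp only [Nat.add_sub_cancel] at h3
      exact h3.symm.trans (ih (by omega))
  -- pigeonhole: two equal states among positions n .. n+k+1
  obtain ⟨x, y, hxy, hsxy⟩ := Fintype.exists_ne_map_eq_of_card_lt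
    (fun t : Fin (k + 2) => s (n + t)) (by simp [hk])
  have main : ∀ a b : ℕ, n ≤ a → a < b → b ≤ n + (k + 1) → s a = s b → False := by
    intro a b hna hab hbk hsab
    set d := b - a with hd
    set i' : ℕ → Set I := fun m => if m ≤ a then i m else i (a + 1 + ((m - (a + 1)) % d)) with hi'
    set s' : ℕ → Q := fun m => T.run ((List.range (m + 1)).map i') with hs'
    have hi'eq : ∀ m, m ≤ b → i' m = i m := by
      intro m hm
      by_cases h : m ≤ a
      · simp [hi', h]
      · have h1 : m - (a + 1) < d := by omega
        have h2 : a + 1 + (m - (a + 1)) % d = m := by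
          rw [Nat.mod_eq_of_lt h1]; omega
        simp only [hi', if_neg h, h2]
    have hs'eq : ∀ m, m ≤ b → s' m = s m := by
      intro m hm
      simp only [hs', hs]
      congr 1
      refine List.map_congr_left ?_
      intro t ht
      rw [List.mem_range] at ht
      exact hi'eq t (by omega)
    have hi'per : ∀ m, a < m → i' (m + d) = i' m := by
      intro m hm
      have h1 : ¬ m + d ≤ a := by omega
      have h2 : ¬ m ≤ a := by omega
      simp only [hi', if_neg h1, if_neg h2]
      have h3 : m + d - (a + 1) = (m - (a + 1)) + d := by omega
      rw [h3, Nat.add_mod_right]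
    have hs'per : ∀ m, a ≤ m → s' (m + d) = s' m := by
      intro m hm
      induction m, hm using Nat.le_induction with
      | base =>
        have hb : a + d = b := by omega
        rw [hb, hs'eq b le_rfl, ← hsab, ← hs'eq a (by omega)]
      | succ m hm ih =>
        have e1 : m + 1 + d = (m + d) + 1 := by omega
        have e2 : i' (m + d + 1) = i' (m + 1) := by
          have h := hi'per (m + 1) (by omega)
          rw [show m + 1 + d = m + d + 1 by omega] at h
          exact h
        calc s' (m + 1 + d) = s' ((m + d) + 1) := by rw [e1]
          _ = T.δ (s' (m + d)) (i' (m + d + 1)) := run_succ' T i' (m + d + 1)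
          _ = T.δ (s' m) (i' (m + 1)) := by rw [ih, e2]
          _ = s' (m + 1) := (run_succ' T i' (m + 1)).symm
    have hdpos : 0 < d := by omega
    have hreach : ∀ m, a ≤ m → ∃ r, a ≤ r ∧ r ≤ b ∧ s' m = s r := by
      intro m
      induction m using Nat.strong_induction_on with
      | _ m ih =>
        intro hm
        by_cases hb : m ≤ b
        · exact ⟨m, hm, hb, hs'eq m hb⟩
        · have h1 : a ≤ m - d := by omega
          have h2 : m - d < m := by omega
          have h3 : s' m = s' (m - d) := by
            have := hs'per (m - d) h1
            rw [show m - d + d = m by omega] at this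
            exact this
          obtain ⟨r, hr1, hr2, hr3⟩ := ih (m - d) h2 h1
          exact ⟨r, hr1, hr2, h3.trans hr3⟩
    -- the truth value of c in the outcome of i' is constant from a on
    set w' := outcomeW T.strategy i' with hw'
    have hconst' : ∀ m, a ≤ m → ((c ∈ w' m) ↔ (c ∈ w n)) := by
      intro m hm
      obtain ⟨r, hr1, hr2, hr3⟩ := hreach m hm
      have e1 : (c ∈ w' m) ↔ none ∈ T.out (s' m) := mem_outcome_inr_none' T i' m
      have e2 : (c ∈ w r) ↔ none ∈ T.out (s r) := mem_outcome_inr_none' T i r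
      rw [e1, hr3, ← e2]
      exact hconst r (by omega) (by omega)
    have hsat := hwin i'
    simp only [cRealForm, cFormAt, Sat] at hsat
    obtain ⟨-, hp, hn⟩ := hsat
    obtain ⟨m1, hm1, hp1⟩ := inf_pos' _ _ _ hp a
    obtain ⟨m2, hm2, hp2⟩ := inf_neg' _ _ _ hn a
    rw [hconst' m1 hm1] at hp1
    rw [hconst' m2 hm2] at hp2
    exact hp2 hp1
  rcases hxy.lt_or_gt with h | h
  · exact main (n + x) (n + y) (by omega) (by omega) (by omega) hsxy
  · exact main (n + y) (n + x) (by omega) (by omega) (by omega) hsxy.symm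


end PLDL
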